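/- Let G be any two-by-two game and let μ be a mixed quantum strategy for Player Two. Then there exists a real linear subspace V of ℍ ≅ ℝ⁴ such that the set of unit quaternions p that are optimal responses for Player One to μ equals the intersection of the unit sphere S³ with V. -/

import Mathlib

noncomputable section

open MeasureTheory

local notation "ℍ" => Quaternion ℝ

instance : MeasurableSpace (Quaternion ℝ) := borel _
instance : BorelSpace (Quaternion ℝ) := ⟨rfl⟩

/-- The four real coordinates of a quaternion: `p = π₁(p) + π₂(p)i + π₃(p)j + π₄(p)k`. -/
def piQ (t : Fin 4) (p : ℍ) : ℝ := ![p.re, p.imI, p.imJ, p.imK] t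

/-- The standard inner product on ℍ ≅ ℝ⁴. -/
def qinner (p q : ℍ) : ℝ := ∑ t : Fin 4, piQ t p * piQ t q

/-- The quaternions `i`, `j`, `k`. -/
def qI : ℍ := ⟨0, 1, 0, 0⟩
def qJ : ℍ := ⟨0, 0, 1, 0⟩
def qK : ℍ := ⟨0, 0, 0, 1⟩

/-- A mixed quantum strategy: a Borel probability measure on the unit quaternions. -/
def IsMixed (μ : Measure ℍ) : Prop :=
  IsProbabilityMeasure μ ∧ μ {p : ℍ | ‖p‖ = 1} = 1

/-- Quantum payoff with payoff vector `X`: `P^Q(p,q) = Σ_t π_t(pq)² X_t`. -/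
def payoff (X : Fin 4 → ℝ) (p q : ℍ) : ℝ :=
  ∑ t : Fin 4, (piQ t (p * q)) ^ 2 * X t

/-- Expected payoff of a pair of mixed strategies. -/
def payoffM (X : Fin 4 → ℝ) (ν μ : Measure ℍ) : ℝ :=
  ∫ p, ∫ q, payoff X p q ∂μ ∂ν

/-- Mixed-strategy Nash equilibrium of the quantum game with payoff vectors `X`, `Y`. -/
def IsNash (X Y : Fin 4 → ℝ) (ν μ : Measure ℍ) : Prop :=
  IsMixed ν ∧ IsMixed μ ∧
    (∀ ν' : Measure ℍ, IsMixed ν' → payoffM X ν' μ ≤ payoffM X ν μ) ∧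
    (∀ μ' : Measure ℍ, IsMixed μ' → payoffM Y ν μ' ≤ payoffM Y ν μ)

/-- Equivalence of mixed quantum strategies. -/
def StratEquiv (μ μ' : Measure ℍ) : Prop :=
  ∀ p : ℍ, ‖p‖ = 1 → ∀ t : Fin 4,
    ∫ q, (piQ t (p * q)) ^ 2 ∂μ = ∫ q, (piQ t (p * q)) ^ 2 ∂μ'

/-- Equivalence of pairs of mixed strategies: `(ν,μ) ∼ (ν',μ')` iff there is a unit
quaternion `u` with `ν' ∼ ν·u` and `μ' ∼ u⁻¹·μ`. -/
def PairEquiv (ν μ ν' μ' : Measure ℍ) : Prop :=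
  ∃ u : ℍ, ‖u‖ = 1 ∧
    StratEquiv (Measure.map (fun p => p * u) ν) ν' ∧
    StratEquiv (Measure.map (fun q => u⁻¹ * q) μ) μ'

/-- A generic two-by-two game: all payoffs distinct and all pairwise sums distinct. -/
def Generic (X Y : Fin 4 → ℝ) : Prop :=
  Function.Injective X ∧ Function.Injective Y ∧
    (∀ s t s' t' : Fin 4, s < t → s' < t' → X s + X t = X s' + X t' → s = s' ∧ t = t') ∧
    (∀ s t s' t' : Fin 4, s < t → s' < t' → Y s + Y t = Y s' + Y t' → s = s' ∧ t = t')

/-- `K(p) = π₁(p)π₂(p)π₃(p)π₄(p)`. -/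
def K (p : ℍ) : ℝ := p.re * p.imI * p.imJ * p.imK

/-- Intertwined quadruple of quaternions. -/
def Intertwined (p q r s : ℍ) : Prop :=
  ∃ α : ℝ, α ≠ 0 ∧ ∀ X Y : ℝ, α * K (X • p + Y • q) = K (X • r + Y • s)

/-- Fully intertwined quadruple of quaternions. -/
def FullyIntertwined (p q r s : ℍ) : Prop :=
  Intertwined p q r s ∧ Intertwined p r q s

/-- `p` is an optimal response for Player One to the mixed strategy `μ`. -/
def Optimal₁ (X : Fin 4 → ℝ) (μ : Measure ℍ) (p : ℍ) : Prop :=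
  ‖p‖ = 1 ∧ ∀ p' : ℍ, ‖p'‖ = 1 → ∫ q, payoff X p' q ∂μ ≤ ∫ q, payoff X p q ∂μ

/-- `q` is an optimal response for Player Two to the mixed strategy `ν`. -/
def Optimal₂ (Y : Fin 4 → ℝ) (ν : Measure ℍ) (q : ℍ) : Prop :=
  ‖q‖ = 1 ∧ ∀ q' : ℍ, ‖q'‖ = 1 → ∫ p, payoff Y p q' ∂ν ≤ ∫ p, payoff Y p q ∂ν

/-!
For fixed `q` the payoff `P₁^Q(p, q)` is a quadratic form in `p`, so the expected payoff
`p ↦ ∫ P₁^Q(p, q) dμ(q)` is the diagonal `B p p` of a symmetric bilinear form `B` on `ℍ ≅ ℝ⁴`.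
If `B p₀ p₀ = M` is the maximum of the diagonal on the unit sphere, then `D = M ⟪·, ·⟫ - B` is
positive semidefinite, and a unit vector `p` attains the maximum iff `D p p = 0`, iff `D p = 0`
(Cauchy–Schwarz for `D`). So the optimal responses are the unit vectors of `ker D`, the top
eigenspace of `B`; if the maximum is not attained, take `V = ⊥`.
-/

open Metric

section PositiveSemidefinite

variable {R M : Type*} [Field R] [LinearOrder R] [IsStrictOrderedRing R] [AddCommGroup M]
  [Module R M]

theorem LinearMap.BilinForm.IsPosSemidef.eq_zero_of_apply_self_eq_zero
    {D : LinearMap.BilinForm R M} (hD : D.IsPosSemidef) {p : M} (hp : D p p = 0) : D p = 0 := by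
  ext v
  -- Evaluate `D` at `(D v v + 1) • p - D p v • v`: it equals `-(D p v)² (D v v + 2)`.
  have h := hD.isNonneg.nonneg ((D v v + 1) • p - D p v • v)
  have hv := hD.isNonneg.nonneg v
  simp only [map_sub, map_smul, LinearMap.sub_apply, LinearMap.smul_apply, smul_eq_mul, hp,
    hD.isSymm.eq v p] at h
  simp only [LinearMap.zero_apply]
  nlinarith [sq_nonneg (D p v), mul_nonneg (sq_nonneg (D p v)) hv]

end PositiveSemidefinite

section Sphere

variable {E : Type*} [NormedAddCommGroup E] [InnerProductSpace ℝ E]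

theorem LinearMap.BilinForm.apply_self_le_of_isMaxOn_sphere (B : LinearMap.BilinForm ℝ E)
    {p₀ : E} (hp₀ : IsMaxOn (fun w => B w w) (sphere 0 1) p₀) (w : E) :
    B w w ≤ B p₀ p₀ * ‖w‖ ^ 2 := by
  rcases eq_or_ne w 0 with rfl | hw
  · simp
  have hnorm : ‖w‖ ≠ 0 := norm_ne_zero_iff.mpr hw
  have hu : ‖w‖⁻¹ • w ∈ sphere (0 : E) 1 := by
    simp [norm_smul, hnorm]
  have h := isMaxOn_iff.mp hp₀ _ hu
  simp only [map_smul, LinearMap.smul_apply, smul_eq_mul] at h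
  have hpos : 0 < ‖w‖ ^ 2 := by positivity
  calc B w w = ‖w‖ ^ 2 * (‖w‖⁻¹ * (‖w‖⁻¹ * B w w)) := by field_simp
    _ ≤ ‖w‖ ^ 2 * B p₀ p₀ := mul_le_mul_of_nonneg_left h hpos.le
    _ = B p₀ p₀ * ‖w‖ ^ 2 := mul_comm _ _

theorem LinearMap.BilinForm.exists_submodule_sphere_inter_eq_isMaxOn
    (B : LinearMap.BilinForm ℝ E) (hB : B.IsSymm) :
    ∃ V : Submodule ℝ E,
      {p ∈ sphere (0 : E) 1 | IsMaxOn (fun w => B w w) (sphere 0 1) p} = sphere 0 1 ∩ V := by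
  by_cases h : ∃ p₀ ∈ sphere (0 : E) 1, IsMaxOn (fun w => B w w) (sphere 0 1) p₀
  swap
  · refine ⟨⊥, ?_⟩
    ext p
    simp only [Set.mem_sep_iff, Set.mem_inter_iff, SetLike.mem_coe, Submodule.mem_bot]
    constructor
    · rintro ⟨hp, hmax⟩
      exact absurd ⟨p, hp, hmax⟩ h
    · rintro ⟨hp, rfl⟩
      simp at hp
  obtain ⟨p₀, hp₀, hmax⟩ := h
  set D : LinearMap.BilinForm ℝ E := B p₀ p₀ • innerₗ E - B
  have hDpos : D.IsPosSemidef := by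
    refine ⟨⟨fun x y => ?_⟩, ⟨fun w => ?_⟩⟩
    · simp [D, real_inner_comm x y, hB.eq x y]
    · simp [D, B.apply_self_le_of_isMaxOn_sphere hmax w]
  refine ⟨LinearMap.ker D, Set.ext fun p => ?_⟩
  simp only [Set.mem_sep_iff, Set.mem_inter_iff, SetLike.mem_coe, LinearMap.mem_ker]
  refine and_congr_right fun hp => ?_
  have hDp : D p p = B p₀ p₀ - B p p := by
    simp [D, mem_sphere_zero_iff_norm.mp hp]
  constructor
  · intro hpmax
    refine hDpos.eq_zero_of_apply_self_eq_zero (le_antisymm ?_ (hDpos.isNonneg.nonneg p))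
    linarith [isMaxOn_iff.mp hpmax p₀ hp₀]
  · intro hDp0
    have hDpp : D p p = 0 := by rw [hDp0]; rfl
    refine isMaxOn_iff.mpr fun x hx => ?_
    linarith [isMaxOn_iff.mp hmax x hx]

end Sphere

section IntegralBilinForm

variable {Ω M : Type*} [MeasurableSpace Ω] [AddCommGroup M] [Module ℝ M]

def integralBilinForm (μ : Measure Ω) (B : Ω → LinearMap.BilinForm ℝ M)
    (hB : ∀ x y, Integrable (fun ω => B ω x y) μ) : LinearMap.BilinForm ℝ M :=
  LinearMap.mk₂ ℝ (fun x y => ∫ ω, B ω x y ∂μ)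
    (fun x₁ x₂ y => by
      simp only [map_add, LinearMap.add_apply]; exact integral_add (hB _ _) (hB _ _))
    (fun c x y => by
      simp only [map_smul, LinearMap.smul_apply, smul_eq_mul]; exact integral_const_mul c _)
    (fun x y₁ y₂ => by simp only [map_add]; exact integral_add (hB _ _) (hB _ _))
    (fun c x y => by simp only [map_smul, smul_eq_mul]; exact integral_const_mul c _)

@[simp]
theorem integralBilinForm_apply (μ : Measure Ω) (B : Ω → LinearMap.BilinForm ℝ M)
    (hB : ∀ x y, Integrable (fun ω => B ω x y) μ) (x y : M) :
    integralBilinForm μ B hB x y = ∫ ω, B ω x y ∂μ :=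
  rfl

theorem isSymm_integralBilinForm (μ : Measure Ω) {B : Ω → LinearMap.BilinForm ℝ M}
    (hB : ∀ x y, Integrable (fun ω => B ω x y) μ) (hsymm : ∀ ω, (B ω).IsSymm) :
    (integralBilinForm μ B hB).IsSymm :=
  ⟨fun x y => by simp only [integralBilinForm_apply, (hsymm _).eq x y]⟩

end IntegralBilinForm

theorem sphere_zero_eq_setOf_norm {E : Type*} [SeminormedAddCommGroup E] (r : ℝ) :
    sphere (0 : E) r = {x | ‖x‖ = r} := by
  ext
  simp

theorem IsMixed.ae_mem_sphere {μ : Measure ℍ} (hμ : IsMixed μ) :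
    ∀ᵐ q ∂μ, q ∈ sphere (0 : ℍ) 1 := by
  have := hμ.1
  rw [ae_mem_iff_measure_eq isClosed_sphere.nullMeasurableSet, sphere_zero_eq_setOf_norm, hμ.2,
    measure_univ]

theorem IsMixed.integrable {E : Type*} [NormedAddCommGroup E] {μ : Measure ℍ} (hμ : IsMixed μ)
    {f : ℍ → E} (hf : Continuous f) : Integrable f μ := by
  have := hμ.1
  rw [← Measure.restrict_eq_self_of_ae_mem hμ.ae_mem_sphere]
  exact hf.continuousOn.integrableOn_compact (isCompact_sphere 0 1)

def piQₗ (t : Fin 4) : ℍ →ₗ[ℝ] ℝ :=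
  (LinearMap.proj t).comp (QuaternionAlgebra.linearEquivTuple (-1 : ℝ) 0 (-1)).toLinearMap

@[simp]
theorem piQₗ_apply (t : Fin 4) (p : ℍ) : piQₗ t p = piQ t p :=
  rfl

@[fun_prop]
theorem continuous_piQ (t : Fin 4) : Continuous (piQ t) :=
  (piQₗ t).continuous_of_finiteDimensional

def payoffForm (X : Fin 4 → ℝ) (q : ℍ) : LinearMap.BilinForm ℝ ℍ :=
  ∑ t, X t • LinearMap.BilinForm.linMulLin (piQₗ t ∘ₗ LinearMap.mulRight ℝ q)
    (piQₗ t ∘ₗ LinearMap.mulRight ℝ q)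

theorem payoffForm_apply (X : Fin 4 → ℝ) (q p p' : ℍ) :
    payoffForm X q p p' = ∑ t, X t * (piQ t (p * q) * piQ t (p' * q)) := by
  simp [payoffForm, LinearMap.BilinForm.linMulLin_apply]

theorem payoff_eq_payoffForm (X : Fin 4 → ℝ) (p q : ℍ) : payoff X p q = payoffForm X q p p := by
  simp only [payoff, payoffForm_apply, sq, mul_comm]

theorem isSymm_payoffForm (X : Fin 4 → ℝ) (q : ℍ) : (payoffForm X q).IsSymm :=
  ⟨fun p p' => by simp only [payoffForm_apply, mul_comm]⟩

theorem continuous_payoffForm_apply (X : Fin 4 → ℝ) (p p' : ℍ) :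
    Continuous fun q => payoffForm X q p p' := by
  simp only [payoffForm_apply]
  fun_prop

/-- Given Player Two's mixed strategy `μ`, Player One's optimal-response set is
the intersection of the unit sphere `S³` with a real linear subspace of ℍ ≅ ℝ⁴. -/
theorem optimal_set_eq_sphere_inter_subspace (X : Fin 4 → ℝ) (μ : Measure ℍ)
    (hμ : IsMixed μ) :
    ∃ V : Submodule ℝ ℍ,
      {p : ℍ | Optimal₁ X μ p} = {p : ℍ | ‖p‖ = 1} ∩ (V : Set ℍ) := by
  set B := integralBilinForm μ (payoffForm X) fun p p' =>
    hμ.integrable (continuous_payoffForm_apply X p p')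
  have hpayoff : ∀ p, ∫ q, payoff X p q ∂μ = B p p := fun p => by
    simp only [B, integralBilinForm_apply, payoff_eq_payoffForm]
  obtain ⟨V, hV⟩ := B.exists_submodule_sphere_inter_eq_isMaxOn
    (isSymm_integralBilinForm μ _ (isSymm_payoffForm X))
  refine ⟨V, ?_⟩
  rw [← sphere_zero_eq_setOf_norm, ← hV]
  ext p
  simp only [Optimal₁, Set.mem_ofPred_eq, isMaxOn_iff, mem_sphere_zero_iff_norm, hpayoff]
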